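/- (Kramers degeneracy.) Let E be a complex inner product space, K : E → E an antiunitary map with K ∘ K = −id, and A : E → E a ℂ-linear map commuting with K (i.e. A(Kx) = K(Ax) for all x). Then for every real number λ, the eigenspace {x ∈ E : Ax = λx} is invariant under K; consequently, if this eigenspace is finite-dimensional, its complex dimension is even. -/

import Mathlib

/-!
An antilinear `J` with `J² = -1` anticommutes with multiplication by `i`, so `i` and `J` generate
an action of the quaternions `ℍ`, making the space an `ℍ`-vector space. Hence `dim_ℝ = 4 dim_ℍ`,
while `dim_ℝ = 2 dim_ℂ`, so `dim_ℂ = 2 dim_ℍ` is even. A `ℂ`-linear `A` commuting with an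
antilinear `K` maps the `μ`-eigenspace to the `conj μ`-eigenspace, so `K` restricts to each real
eigenspace.
-/

open Module ComplexConjugate Quaternion

theorem AlgHom.isScalarTower_compHom {R A M : Type*} [CommSemiring R] [Semiring A] [Algebra R A]
    [AddCommMonoid M] [Module R M] (φ : A →ₐ[R] Module.End R M) :
    letI := Module.compHom M φ.toRingHom
    IsScalarTower R A M :=
  letI := Module.compHom M φ.toRingHom
  ⟨fun r a x => by
    change φ (r • a) x = r • φ a x
    rw [map_smul, LinearMap.smul_apply]⟩

section Antilinear

variable {V : Type*} [AddCommGroup V] [Module ℂ V]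

theorem finrank_complex_eq_two_mul_finrank_quaternion [Module ℍ[ℝ] V]
    [IsScalarTower ℝ ℍ[ℝ] V] : finrank ℂ V = 2 * finrank ℍ[ℝ] V := by
  have h := finrank_mul_finrank ℝ ℍ[ℝ] V
  rw [Quaternion.finrank_eq_four, finrank_real_of_complex] at h
  omega

def LinearMap.toRealLinearMap (J : V →ₗ⋆[ℂ] V) : V →ₗ[ℝ] V where
  toFun := J
  map_add' := J.map_add
  map_smul' r x := by simpa [Complex.coe_smul] using J.map_smulₛₗ (r : ℂ) x

def quaternionBasisOfAntilinear (J : V →ₗ⋆[ℂ] V) (hJ : ∀ x, J (J x) = -x) :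
    QuaternionAlgebra.Basis (Module.End ℝ V) (-1 : ℝ) 0 (-1) where
  i := DistribSMul.toLinearMap ℝ V Complex.I
  j := J.toRealLinearMap
  k := DistribSMul.toLinearMap ℝ V Complex.I * J.toRealLinearMap
  i_mul_i := by ext x; simp [smul_smul]
  j_mul_j := by ext x; simp [LinearMap.toRealLinearMap, hJ]
  i_mul_j := rfl
  j_mul_i := by ext x; simp [LinearMap.toRealLinearMap]

theorem even_finrank_of_antilinear_sq_eq_neg (J : V →ₗ⋆[ℂ] V) (hJ : ∀ x, J (J x) = -x) :
    Even (finrank ℂ V) := by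
  let φ : ℍ[ℝ] →ₐ[ℝ] Module.End ℝ V :=
    QuaternionAlgebra.lift (quaternionBasisOfAntilinear J hJ)
  let _ : Module ℍ[ℝ] V := Module.compHom V φ.toRingHom
  have _ := φ.isScalarTower_compHom
  exact ⟨_, finrank_complex_eq_two_mul_finrank_quaternion.trans (two_mul _)⟩

end Antilinear

theorem Module.End.antilinear_mem_eigenspace_conj {E : Type*} [AddCommGroup E] [Module ℂ E]
    {A : Module.End ℂ E} {K : E →ₗ⋆[ℂ] E} (hAK : ∀ x, A (K x) = K (A x)) {μ : ℂ}
    {x : E} (hx : x ∈ A.eigenspace μ) : K x ∈ A.eigenspace (conj μ) := by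
  rw [Module.End.mem_eigenspace_iff] at hx ⊢
  rw [hAK, hx, K.map_smulₛₗ, starRingEnd_apply]

theorem kramers_degeneracy_general
    {E : Type*} [NormedAddCommGroup E] [InnerProductSpace ℂ E] (K : E → E)
    (hadd : ∀ x y : E, K (x + y) = K x + K y)
    (hsmul : ∀ (c : ℂ) (x : E), K (c • x) = (starRingEnd ℂ c) • K x)
    (hKK : ∀ x : E, K (K x) = -x)
    (A : E →ₗ[ℂ] E) (hAK : ∀ x : E, A (K x) = K (A x)) (lam : ℝ) :
    (∀ x ∈ Module.End.eigenspace (A : Module.End ℂ E) (lam : ℂ),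
        K x ∈ Module.End.eigenspace (A : Module.End ℂ E) (lam : ℂ)) ∧
    (FiniteDimensional ℂ (Module.End.eigenspace (A : Module.End ℂ E) (lam : ℂ)) →
        Even (Module.finrank ℂ (Module.End.eigenspace (A : Module.End ℂ E) (lam : ℂ)))) := by
  let K' : E →ₗ⋆[ℂ] E := { toFun := K, map_add' := hadd, map_smul' := hsmul }
  have hK'_eigenspace : ∀ x ∈ Module.End.eigenspace (A : Module.End ℂ E) (lam : ℂ),
      K' x ∈ Module.End.eigenspace (A : Module.End ℂ E) (lam : ℂ) := fun x hx => by
    simpa only [Complex.conj_ofReal] using Module.End.antilinear_mem_eigenspace_conj hAK hx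
  refine ⟨hK'_eigenspace, fun _ => ?_⟩
  exact even_finrank_of_antilinear_sq_eq_neg (K'.restrict hK'_eigenspace)
    fun x => Subtype.ext (hKK x)

/-- Kramers degeneracy: if `K` is antiunitary with `K ∘ K = -id` and `A` is a `ℂ`-linear
map commuting with `K`, then for every real `λ` the eigenspace `{x | A x = λ x}` is
invariant under `K`; if it is finite-dimensional, its complex dimension is even. -/
theorem kramers_degeneracy
    {E : Type*} [NormedAddCommGroup E] [InnerProductSpace ℂ E] (K : E → E)
    (hadd : ∀ x y : E, K (x + y) = K x + K y)
    (hsmul : ∀ (c : ℂ) (x : E), K (c • x) = (starRingEnd ℂ c) • K x)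
    (hinner : ∀ x y : E, (inner ℂ (K x) (K y) : ℂ) = inner ℂ y x)
    (hKK : ∀ x : E, K (K x) = -x)
    (A : E →ₗ[ℂ] E) (hAK : ∀ x : E, A (K x) = K (A x)) (lam : ℝ) :
    (∀ x ∈ Module.End.eigenspace (A : Module.End ℂ E) (lam : ℂ),
        K x ∈ Module.End.eigenspace (A : Module.End ℂ E) (lam : ℂ)) ∧
    (FiniteDimensional ℂ (Module.End.eigenspace (A : Module.End ℂ E) (lam : ℂ)) →
        Even (Module.finrank ℂ (Module.End.eigenspace (A : Module.End ℂ E) (lam : ℂ)))) :=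
  kramers_degeneracy_general K hadd hsmul hKK A hAK lam
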